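/- Convergence of infinite-dimensional entropic mirror descent to a mixed Nash equilibrium: Suppose M > 0 satisfies ‖g − Gν‖∞ ≤ M for all ν ∈ M(Θ) and ‖G†μ‖∞ ≤ M for all μ ∈ M(W). Let (μ_NE, ν_NE) be a mixed Nash equilibrium of F, let μ₁ ∈ M(W), ν₁ ∈ M(Θ) be such that D₀ = KL(μ_NE‖μ₁) + KL(ν_NE‖ν₁) is finite and positive, and run the mirror-descent iterates μ_{t+1} = MD_η(μ_t, −g + Gν_t), ν_{t+1} = MD_η(ν_t, −G†μ_t) for t = 1, …, T with step-size η = √(D₀/T)/M. Then the averaged measures μ̄_T = (1/T) Σ_{t=1}^T μ_t and ν̄_T = (1/T) Σ_{t=1}^T ν_t satisfy F(μ_NE, ν̄_T) − F(μ̄_T, ν_NE) ≤ 2 M √(D₀/T); in particular |F(μ_NE, ν̄_T) − F(μ_NE, ν_NE)| ≤ 2 M √(D₀/T) and |F(μ̄_T, ν_NE) − F(μ_NE, ν_NE)| ≤ 2 M √(D₀/T). -/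

import Mathlib

open MeasureTheory Real ENNReal

namespace Paper

noncomputable section

/-- Total variation distance between two measures:
`dTV(μ,μ') = sup over measurable A of |μ(A) − μ'(A)|`. -/
def tvDist {E : Type*} [MeasurableSpace E] (μ μ' : Measure E) : ℝ :=
  ⨆ A : {A : Set E // MeasurableSet A}, |(μ A.1).toReal - (μ' A.1).toReal|

/-- Essential supremum of `|h|` on `Z` with respect to Lebesgue measure. -/
def supNormOn {d : ℕ} (Z : Set (Fin d → ℝ)) (h : (Fin d → ℝ) → ℝ) : ℝ :=
  (essSup (fun z => ENNReal.ofReal |h z|) (volume.restrict Z)).toReal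

/-- `μ ∈ M(Z)`: a Borel probability measure on `Z`, absolutely continuous w.r.t.
Lebesgue measure restricted to `Z`, with (a.e. on `Z`) positive density `ρ`. -/
def IsDensityMeasure {d : ℕ} (Z : Set (Fin d → ℝ)) (μ : Measure (Fin d → ℝ))
    (ρ : (Fin d → ℝ) → ℝ) : Prop :=
  IsProbabilityMeasure μ ∧ Measurable ρ ∧
    (∀ᵐ z ∂(volume.restrict Z), 0 < ρ z) ∧
    μ = (volume.restrict Z).withDensity (fun z => ENNReal.ofReal (ρ z))

/-- Entropic mirror-descent update `MD_η(μ, h)` for `μ` with density `ρ` on `Z`: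
the probability measure with density `ρ e^{−ηh} / ∫_Z ρ e^{−ηh}`. -/
def MDmeas {d : ℕ} (Z : Set (Fin d → ℝ)) (η : ℝ) (ρ h : (Fin d → ℝ) → ℝ) :
    Measure (Fin d → ℝ) :=
  (volume.restrict Z).withDensity
    (fun z => ENNReal.ofReal
      (ρ z * Real.exp (-η * h z) / ∫ y in Z, ρ y * Real.exp (-η * h y)))

/-- Gibbs measure on `Z` with density `e^h / ∫_Z e^h` w.r.t. Lebesgue measure. -/
def gibbsMeasure {d : ℕ} (Z : Set (Fin d → ℝ)) (h : (Fin d → ℝ) → ℝ) :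
    Measure (Fin d → ℝ) :=
  (volume.restrict Z).withDensity
    (fun z => ENNReal.ofReal (Real.exp (h z) / ∫ y in Z, Real.exp (h y)))

/-- Log-partition functional `Φ*(h) = log ∫_Z e^h dz`. -/
def logPart {d : ℕ} (Z : Set (Fin d → ℝ)) (h : (Fin d → ℝ) → ℝ) : ℝ :=
  Real.log (∫ z in Z, Real.exp (h z))

/-- Dual Bregman divergence `D*(h,h') = Φ*(h) − Φ*(h') − ∫_Z (h−h') dGibbs(h')`. -/
def dualBregman {d : ℕ} (Z : Set (Fin d → ℝ)) (h h' : (Fin d → ℝ) → ℝ) : ℝ :=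
  logPart Z h - logPart Z h' - ∫ z, (h z - h' z) ∂(gibbsMeasure Z h')

/-- Payoff operator `(Gν)(w) = ∫_Θ K(w,θ) dν(θ)`. -/
def Gop {p q : ℕ} (K : (Fin p → ℝ) → (Fin q → ℝ) → ℝ) (ν : Measure (Fin q → ℝ))
    (w : Fin p → ℝ) : ℝ :=
  ∫ θ, K w θ ∂ν

/-- Adjoint payoff operator `(G†μ)(θ) = ∫_W K(w,θ) dμ(w)`. -/
def Gadj {p q : ℕ} (K : (Fin p → ℝ) → (Fin q → ℝ) → ℝ) (μ : Measure (Fin p → ℝ))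
    (θ : Fin q → ℝ) : ℝ :=
  ∫ w, K w θ ∂μ

/-- Mixed-strategy game value `F(μ,ν) = ⟨μ,g⟩ − ⟨μ,Gν⟩`. -/
def payoff {p q : ℕ} (g : (Fin p → ℝ) → ℝ) (K : (Fin p → ℝ) → (Fin q → ℝ) → ℝ)
    (μ : Measure (Fin p → ℝ)) (ν : Measure (Fin q → ℝ)) : ℝ :=
  (∫ w, g w ∂μ) - ∫ w, Gop K ν w ∂μ

/-!
Entropic mirror descent obeys a three-point inequality: if `ρ' ∝ ρ e^{-ηh}` with `|h| ≤ M`, then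
for every density `τ`, `η (⟨ρ, h⟩ - ⟨τ, h⟩) ≤ KL(τ‖ρ) - KL(τ‖ρ') + M²η²/2`. The relative entropies
are related exactly through the log-partition function `log ∫ ρ e^{-ηh}`, and Hoeffding's lemma
bounds that by `-η ⟨ρ, h⟩ + M²η²/2`. Applying this to both players with the equilibrium as
comparator, the bilinear terms cancel by Fubini, so the round gap `F(μ_NE, ν_t) - F(μ_t, ν_NE)` is
at most `1/η` times the decrease of `KL(μ_NE‖μ_t) + KL(ν_NE‖ν_t)` plus `M²η`. Summing telescopes,
and the choice of `η` balances `D₀/(ηT)` against `M²η`. As `F` is affine in each argument, the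
averaged gap is the gap at the averaged strategies, and the Nash inequalities place both one-sided
deviations between `0` and that gap.
-/

section Densities

open ProbabilityTheory

variable {α : Type*} [MeasurableSpace α] {m : Measure α}

theorem integral_exp_mul_le_of_abs_le {μ : Measure α} [IsProbabilityMeasure μ] {X : α → ℝ}
    (hX : AEMeasurable X μ) {M : ℝ} (hXM : ∀ᵐ x ∂μ, |X x| ≤ M) (t : ℝ) :
    ∫ x, exp (t * X x) ∂μ ≤ exp (t * ∫ x, X x ∂μ + M ^ 2 * t ^ 2 / 2) := by
  have hoeffding := (hasSubgaussianMGF_of_mem_Icc hX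
    (hXM.mono fun x hx => abs_le.1 hx)).mgf_le t
  have hc : (((‖M - -M‖₊ / 2) ^ 2 : NNReal) : ℝ) = M ^ 2 := by
    push_cast
    rw [Real.norm_eq_abs, sub_neg_eq_add, ← two_mul, abs_mul, abs_two,
      mul_div_cancel_left₀ _ two_ne_zero, sq_abs]
  have hshift := mgf_add_const (X := fun x => X x - ∫ x, X x ∂μ) (μ := μ) (t := t)
    (∫ x, X x ∂μ)
  simp only [sub_add_cancel] at hshift
  rw [hc] at hoeffding
  calc ∫ x, exp (t * X x) ∂μ = mgf X μ t := rfl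
    _ ≤ exp (M ^ 2 * t ^ 2 / 2) * exp (t * ∫ x, X x ∂μ) := by
      rw [hshift]; gcongr
    _ = _ := by rw [← Real.exp_add]; ring_nf

theorem withDensity_finsetSum {ι : Type*} (s : Finset ι) {f : ι → α → ℝ≥0∞}
    (hf : ∀ i, Measurable (f i)) :
    m.withDensity (fun x => ∑ i ∈ s, f i x) = ∑ i ∈ s, m.withDensity (f i) := by
  classical
  induction s using Finset.induction_on with
  | empty => simp
  | insert i s hi ih =>
    simp only [Finset.sum_insert hi]
    rw [← ih, ← withDensity_add_left (hf i)]
    rfl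

theorem integral_smul_finsetSum_measure {ι : Type*} {s : Finset ι} {μ : ι → Measure α}
    {f : α → ℝ} (c : ℝ≥0∞) (hf : ∀ i ∈ s, Integrable f (μ i)) :
    ∫ x, f x ∂(c • ∑ i ∈ s, μ i) = c.toReal * ∑ i ∈ s, ∫ x, f x ∂(μ i) := by
  rw [integral_smul_measure, integral_finsetSum_measure hf, smul_eq_mul]

structure IsProbDensity (m : Measure α) (ρ : α → ℝ) : Prop where
  measurable : Measurable ρ
  pos : ∀ᵐ x ∂m, 0 < ρ x
  isProbabilityMeasure : IsProbabilityMeasure (m.withDensity fun x => ENNReal.ofReal (ρ x))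

def relEntropy (m : Measure α) (τ ρ : α → ℝ) : ℝ :=
  ∫ x, τ x * log (τ x / ρ x) ∂m

theorem integral_withDensity_ofReal {ρ : α → ℝ} (hρ : Measurable ρ) (hρ0 : ∀ᵐ x ∂m, 0 ≤ ρ x)
    (f : α → ℝ) :
    ∫ x, f x ∂(m.withDensity fun x => ENNReal.ofReal (ρ x)) = ∫ x, ρ x * f x ∂m := by
  rw [integral_withDensity_eq_integral_toReal_smul hρ.ennreal_ofReal
    (ae_of_all _ fun _ => ENNReal.ofReal_lt_top)]
  refine integral_congr_ae ?_
  filter_upwards [hρ0] with x hx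
  rw [ENNReal.toReal_ofReal hx, smul_eq_mul]

theorem ae_eq_of_withDensity_ofReal_eq {f g : α → ℝ} (hf : Measurable f) (hg : Measurable g)
    (hf0 : ∀ᵐ x ∂m, 0 < f x) (hfin : ∫⁻ x, ENNReal.ofReal (f x) ∂m ≠ ⊤)
    (h : m.withDensity (fun x => ENNReal.ofReal (f x))
      = m.withDensity (fun x => ENNReal.ofReal (g x))) :
    f =ᵐ[m] g := by
  have hae := (withDensity_eq_iff hf.ennreal_ofReal.aemeasurable
    hg.ennreal_ofReal.aemeasurable hfin).1 h
  filter_upwards [hae, hf0] with x hx hfx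
  have hgx : 0 < g x := ENNReal.ofReal_pos.1 (hx ▸ ENNReal.ofReal_pos.2 hfx)
  exact (ENNReal.ofReal_eq_ofReal_iff hfx.le hgx.le).1 hx

namespace IsProbDensity

variable {ρ ρ' τ h : α → ℝ} {M : ℝ}

theorem nonneg (hρ : IsProbDensity m ρ) : ∀ᵐ x ∂m, 0 ≤ ρ x :=
  hρ.pos.mono fun _ hx => hx.le

theorem integral_mul (hρ : IsProbDensity m ρ) (f : α → ℝ) :
    ∫ x, ρ x * f x ∂m = ∫ x, f x ∂(m.withDensity fun x => ENNReal.ofReal (ρ x)) :=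
  (integral_withDensity_ofReal hρ.measurable hρ.nonneg f).symm

theorem lintegral_eq_one (hρ : IsProbDensity m ρ) : ∫⁻ x, ENNReal.ofReal (ρ x) ∂m = 1 := by
  simpa [withDensity_apply] using hρ.isProbabilityMeasure.measure_univ

theorem integrable (hρ : IsProbDensity m ρ) : Integrable ρ m := by
  refine ⟨hρ.measurable.aestronglyMeasurable, ?_⟩
  rw [hasFiniteIntegral_iff_ofReal hρ.nonneg, hρ.lintegral_eq_one]
  exact ENNReal.one_lt_top

theorem integral_eq_one (hρ : IsProbDensity m ρ) : ∫ x, ρ x ∂m = 1 := by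
  rw [integral_eq_lintegral_of_nonneg_ae hρ.nonneg hρ.measurable.aestronglyMeasurable,
    hρ.lintegral_eq_one, ENNReal.toReal_one]

theorem integrable_mul (hρ : IsProbDensity m ρ) {f : α → ℝ} (hf : AEStronglyMeasurable f m)
    {B : ℝ} (hB : ∀ᵐ x ∂m, |f x| ≤ B) : Integrable (fun x => ρ x * f x) m :=
  hρ.integrable.mul_bdd hf hB

theorem relEntropy_nonneg (hρ : IsProbDensity m ρ) {τ : α → ℝ} (hτ : IsProbDensity m τ) :
    0 ≤ relEntropy m τ ρ := by
  by_cases hint : Integrable (fun x => τ x * log (τ x / ρ x)) m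
  swap
  · rw [relEntropy, integral_undef hint]
  -- pointwise, `τ log (τ / ρ) ≥ τ - ρ` by `log y ≤ y - 1`, and `τ - ρ` integrates to zero
  have hpt : ∀ᵐ x ∂m, τ x - ρ x ≤ τ x * log (τ x / ρ x) := by
    filter_upwards [hρ.pos, hτ.pos] with x hρx hτx
    have hlog := Real.log_le_sub_one_of_pos (div_pos hρx hτx)
    rw [Real.log_div hρx.ne' hτx.ne'] at hlog
    rw [Real.log_div hτx.ne' hρx.ne']
    have : τ x * (ρ x / τ x - 1) = ρ x - τ x := by field_simp
    nlinarith [mul_le_mul_of_nonneg_left hlog hτx.le]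
  have := integral_mono_ae (f := fun x => τ x - ρ x) (hτ.integrable.sub hρ.integrable) hint hpt
  rwa [integral_sub hτ.integrable hρ.integrable, hτ.integral_eq_one, hρ.integral_eq_one,
    sub_self] at this

theorem integral_mul_exp_pos (hρ : IsProbDensity m ρ) (hh : Measurable h)
    (hM : ∀ᵐ x ∂m, |h x| ≤ M) (t : ℝ) :
    0 < ∫ x, ρ x * exp (t * h x) ∂m := by
  have := hρ.isProbabilityMeasure
  rw [hρ.integral_mul]
  refine integral_exp_pos (Integrable.of_bound (by fun_prop) (exp (|t| * M)) ?_)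
  filter_upwards [(withDensity_absolutelyContinuous m _).ae_le hM] with x hx
  rw [Real.norm_of_nonneg (exp_pos _).le, exp_le_exp]
  calc t * h x ≤ |t| * |h x| := by rw [← abs_mul]; exact le_abs_self _
    _ ≤ |t| * M := by gcongr

theorem log_integral_mul_exp_le (hρ : IsProbDensity m ρ) (hh : Measurable h)
    (hM : ∀ᵐ x ∂m, |h x| ≤ M) (t : ℝ) :
    log (∫ x, ρ x * exp (t * h x) ∂m) ≤ t * ∫ x, ρ x * h x ∂m + M ^ 2 * t ^ 2 / 2 := by
  have := hρ.isProbabilityMeasure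
  rw [hρ.integral_mul, hρ.integral_mul, ← log_exp (t * _ + _)]
  exact log_le_log (by simpa [hρ.integral_mul] using hρ.integral_mul_exp_pos hh hM t)
    (integral_exp_mul_le_of_abs_le hh.aemeasurable
      ((withDensity_absolutelyContinuous m _).ae_le hM) t)

theorem relEntropy_eq_of_tilt (hρ : IsProbDensity m ρ) (hτ : IsProbDensity m τ)
    (hh : Measurable h) (hM : ∀ᵐ x ∂m, |h x| ≤ M) {η c : ℝ} (hc : 0 < c)
    (hρ' : ρ' =ᵐ[m] fun x => ρ x * exp (-η * h x) / c)
    (hKL : Integrable (fun x => τ x * log (τ x / ρ x)) m) :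
    Integrable (fun x => τ x * log (τ x / ρ' x)) m ∧
      relEntropy m τ ρ' = relEntropy m τ ρ + η * ∫ x, τ x * h x ∂m + log c := by
  have hpt : ∀ᵐ x ∂m, τ x * log (τ x / ρ' x)
      = τ x * log (τ x / ρ x) + (η * (τ x * h x) + log c * τ x) := by
    filter_upwards [hρ', hρ.pos, hτ.pos] with x hx hρx hτx
    rw [hx, Real.log_div hτx.ne' (by positivity), Real.log_div hτx.ne' hρx.ne',
      Real.log_div (by positivity) hc.ne', Real.log_mul hρx.ne' (exp_pos _).ne', log_exp]
    ring
  have hτh : Integrable (fun x => τ x * h x) m :=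
    hτ.integrable_mul hh.aestronglyMeasurable hM
  have hrest : Integrable (fun x => η * (τ x * h x) + log c * τ x) m :=
    (hτh.const_mul η).add (hτ.integrable.const_mul _)
  refine ⟨(hKL.add hrest).congr (hpt.mono fun _ hx => hx.symm), ?_⟩
  rw [relEntropy, relEntropy, integral_congr_ae hpt, integral_add hKL hrest,
    integral_add (hτh.const_mul η) (hτ.integrable.const_mul _), integral_const_mul,
    integral_const_mul, hτ.integral_eq_one, mul_one, add_assoc]

theorem mirrorDescent_step (hρ : IsProbDensity m ρ) (hτ : IsProbDensity m τ)
    (hh : Measurable h) (hM : ∀ᵐ x ∂m, |h x| ≤ M) {η : ℝ}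
    (hρ' : ρ' =ᵐ[m] fun x => ρ x * exp (-η * h x) / ∫ y, ρ y * exp (-η * h y) ∂m)
    (hKL : Integrable (fun x => τ x * log (τ x / ρ x)) m) :
    Integrable (fun x => τ x * log (τ x / ρ' x)) m ∧
      η * (∫ x, ρ x * h x ∂m - ∫ x, τ x * h x ∂m)
        ≤ relEntropy m τ ρ - relEntropy m τ ρ' + M ^ 2 * η ^ 2 / 2 := by
  obtain ⟨hKL', hrel⟩ :=
    hρ.relEntropy_eq_of_tilt hτ hh hM (hρ.integral_mul_exp_pos hh hM (-η)) hρ' hKL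
  refine ⟨hKL', ?_⟩
  have hlog := hρ.log_integral_mul_exp_le hh hM (-η)
  rw [neg_sq] at hlog
  linarith

end IsProbDensity

end Densities

theorem avg_le_of_telescoping {T : ℕ} (hT : 0 < T) {r D : ℕ → ℝ} {η M : ℝ} (hM : 0 < M)
    (hD0 : 0 < D 0) (hDT : 0 ≤ D T) (hη : η = √(D 0 / T) / M)
    (hstep : ∀ t < T, η * r t ≤ D t - D (t + 1) + M ^ 2 * η ^ 2) :
    (T : ℝ)⁻¹ * ∑ t ∈ Finset.range T, r t ≤ 2 * M * √(D 0 / T) := by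
  have hTR : (0 : ℝ) < T := Nat.cast_pos.2 hT
  set s := √(D 0 / T) with hs_def
  have hs : 0 < s := Real.sqrt_pos.2 (div_pos hD0 hTR)
  have hD : D 0 = T * s ^ 2 := by rw [hs_def, sq_sqrt (div_pos hD0 hTR).le]; field_simp
  have hsum : η * ∑ t ∈ Finset.range T, r t ≤ D 0 + T * (M ^ 2 * η ^ 2) :=
    calc η * ∑ t ∈ Finset.range T, r t = ∑ t ∈ Finset.range T, η * r t := Finset.mul_sum _ _ _
      _ ≤ ∑ t ∈ Finset.range T, (D t - D (t + 1) + M ^ 2 * η ^ 2) :=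
        Finset.sum_le_sum fun t ht => hstep t (Finset.mem_range.1 ht)
      _ = D 0 - D T + T * (M ^ 2 * η ^ 2) := by
        rw [Finset.sum_add_distrib, Finset.sum_range_sub', Finset.sum_const, Finset.card_range,
          nsmul_eq_mul]
      _ ≤ D 0 + T * (M ^ 2 * η ^ 2) := by linarith
  -- the step size balances the two terms: `D 0 / η = T * M ^ 2 * η = T * M * s`
  have hbal : D 0 + T * (M ^ 2 * η ^ 2) = η * (2 * M * s * T) := by
    rw [hD, hη]; field_simp; ring
  rw [hbal] at hsum
  rw [inv_mul_le_iff₀ hTR, mul_comm (T : ℝ)]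
  exact le_of_mul_le_mul_left hsum (by rw [hη]; positivity)

theorem ae_abs_le_of_supNormOn_le {d : ℕ} {Z : Set (Fin d → ℝ)} {h : (Fin d → ℝ) → ℝ}
    {B M : ℝ} (hB : ∀ z, |h z| ≤ B) (hM0 : 0 ≤ M) (hM : supNormOn Z h ≤ M) :
    ∀ᵐ z ∂(volume.restrict Z), |h z| ≤ M := by
  -- `supNormOn` is a `toReal`, so the bound `B` is needed to rule out the junk value `⊤.toReal = 0`
  have hne : essSup (fun z => ENNReal.ofReal |h z|) (volume.restrict Z) ≠ ⊤ :=
    ne_top_of_le_ne_top ENNReal.ofReal_ne_top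
      (essSup_le_of_ae_le _ (ae_of_all _ fun z => ENNReal.ofReal_le_ofReal (hB z)))
  have hle := (ENNReal.le_ofReal_iff_toReal_le hne hM0).2 hM
  filter_upwards [ae_le_essSup (fun z => ENNReal.ofReal |h z|)] with z hz
  exact (ENNReal.ofReal_le_ofReal_iff hM0).1 (hz.trans hle)

namespace IsDensityMeasure

variable {d : ℕ} {Z : Set (Fin d → ℝ)} {μ : Measure (Fin d → ℝ)} {ρ : (Fin d → ℝ) → ℝ}

theorem isProbDensity (hμ : IsDensityMeasure Z μ ρ) : IsProbDensity (volume.restrict Z) ρ :=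
  ⟨hμ.2.1, hμ.2.2.1, hμ.2.2.2 ▸ hμ.1⟩

theorem integral_eq (hμ : IsDensityMeasure Z μ ρ) (f : (Fin d → ℝ) → ℝ) :
    ∫ z, f z ∂μ = ∫ z in Z, ρ z * f z := by
  rw [hμ.isProbDensity.integral_mul, ← hμ.2.2.2]

theorem ae_eq_of_eq_MDmeas {μ' : Measure (Fin d → ℝ)} {ρ' h : (Fin d → ℝ) → ℝ} {η : ℝ}
    (hμ : IsDensityMeasure Z μ ρ) (hμ' : IsDensityMeasure Z μ' ρ') (hh : Measurable h)
    (hupd : μ' = MDmeas Z η ρ h) :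
    ρ' =ᵐ[volume.restrict Z] fun z => ρ z * exp (-η * h z) / ∫ y in Z, ρ y * exp (-η * h y) :=
  ae_eq_of_withDensity_ofReal_eq hμ'.2.1 ((hμ.2.1.mul (hh.const_mul (-η)).exp).div_const _)
    hμ'.2.2.1 (hμ'.isProbDensity.lintegral_eq_one ▸ ENNReal.one_ne_top)
    (hμ'.2.2.2.symm.trans hupd)

theorem mirrorDescent_step {μ' μ₀ : Measure (Fin d → ℝ)} {ρ' τ h : (Fin d → ℝ) → ℝ}
    {η B M : ℝ} (hμ : IsDensityMeasure Z μ ρ) (hμ' : IsDensityMeasure Z μ' ρ')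
    (hμ₀ : IsDensityMeasure Z μ₀ τ) (hupd : μ' = MDmeas Z η ρ h) (hh : Measurable h)
    (hB : ∀ z, |h z| ≤ B) (hM0 : 0 ≤ M) (hM : supNormOn Z h ≤ M)
    (hKL : IntegrableOn (fun z => τ z * log (τ z / ρ z)) Z) :
    IntegrableOn (fun z => τ z * log (τ z / ρ' z)) Z ∧
      η * (∫ z, h z ∂μ - ∫ z, h z ∂μ₀)
        ≤ relEntropy (volume.restrict Z) τ ρ - relEntropy (volume.restrict Z) τ ρ'
          + M ^ 2 * η ^ 2 / 2 := by
  rw [hμ.integral_eq, hμ₀.integral_eq]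
  exact hμ.isProbDensity.mirrorDescent_step hμ₀.isProbDensity hh
    (ae_abs_le_of_supNormOn_le hB hM0 hM) (hμ.ae_eq_of_eq_MDmeas hμ' hh hupd) hKL

theorem avg {T : ℕ} (hT : 0 < T)
    {μs : ℕ → Measure (Fin d → ℝ)} {ρs : ℕ → (Fin d → ℝ) → ℝ}
    (h : ∀ t, IsDensityMeasure Z (μs t) (ρs t)) :
    IsDensityMeasure Z ((T : ℝ≥0∞)⁻¹ • ∑ t ∈ Finset.range T, μs t)
      (fun z => (T : ℝ)⁻¹ * ∑ t ∈ Finset.range T, ρs t z) := by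
  have hT0 : (T : ℝ≥0∞) ≠ 0 := Nat.cast_ne_zero.2 hT.ne'
  have hpos : ∀ᵐ z ∂(volume.restrict Z), ∀ t, 0 < ρs t z := ae_all_iff.2 fun t => (h t).2.2.1
  refine ⟨⟨?_⟩, (Finset.measurable_sum _ fun t _ => (h t).2.1).const_mul _, ?_, ?_⟩
  · have : ∀ t, IsProbabilityMeasure (μs t) := fun t => (h t).1
    simp [ENNReal.inv_mul_cancel hT0 (ENNReal.natCast_ne_top T)]
  · filter_upwards [hpos] with z hz
    exact mul_pos (by positivity) (Finset.sum_pos (fun t _ => hz t) (by simpa using hT.ne'))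
  · rw [Finset.sum_congr rfl fun t _ => (h t).2.2.2,
      ← withDensity_finsetSum _ fun t => (h t).2.1.ennreal_ofReal,
      ← withDensity_smul' _ _ (by simp [hT0])]
    refine withDensity_congr_ae ?_
    filter_upwards [hpos] with z hz
    rw [ENNReal.ofReal_mul (by positivity), ENNReal.ofReal_sum_of_nonneg fun t _ => (hz t).le,
      ENNReal.ofReal_inv_of_pos (by positivity), ENNReal.ofReal_natCast]
    rfl

end IsDensityMeasure

section PayoffOperators

variable {p q : ℕ} {K : (Fin p → ℝ) → (Fin q → ℝ) → ℝ} {BK : ℝ}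

theorem measurable_Gop (hK : Measurable (Function.uncurry K)) (ν : Measure (Fin q → ℝ))
    [SFinite ν] : Measurable (Gop K ν) :=
  hK.stronglyMeasurable.integral_prod_right'.measurable

theorem measurable_Gadj (hK : Measurable (Function.uncurry K)) (μ : Measure (Fin p → ℝ))
    [SFinite μ] : Measurable (Gadj K μ) :=
  hK.stronglyMeasurable.integral_prod_left'.measurable

theorem abs_Gop_le (hKbd : ∀ w θ, |K w θ| ≤ BK) (ν : Measure (Fin q → ℝ))
    [IsProbabilityMeasure ν] (w : Fin p → ℝ) : |Gop K ν w| ≤ BK := by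
  simpa [Gop] using norm_integral_le_of_norm_le_const (μ := ν) (f := K w) (ae_of_all _ (hKbd w))

theorem abs_Gadj_le (hKbd : ∀ w θ, |K w θ| ≤ BK) (μ : Measure (Fin p → ℝ))
    [IsProbabilityMeasure μ] (θ : Fin q → ℝ) : |Gadj K μ θ| ≤ BK := by
  simpa [Gadj] using
    norm_integral_le_of_norm_le_const (μ := μ) (f := (K · θ)) (ae_of_all _ fun w => hKbd w θ)

theorem integral_Gop_eq_integral_Gadj (hK : Measurable (Function.uncurry K))
    (hKbd : ∀ w θ, |K w θ| ≤ BK) (μ : Measure (Fin p → ℝ)) [IsProbabilityMeasure μ]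
    (ν : Measure (Fin q → ℝ)) [IsProbabilityMeasure ν] :
    ∫ w, Gop K ν w ∂μ = ∫ θ, Gadj K μ θ ∂ν :=
  integral_integral_swap (Integrable.of_bound hK.aestronglyMeasurable BK
    (ae_of_all _ fun z => hKbd z.1 z.2))

end PayoffOperators

section PayoffAverages

variable {p q : ℕ} {K : (Fin p → ℝ) → (Fin q → ℝ) → ℝ} {BK : ℝ} {g : (Fin p → ℝ) → ℝ} {Bg : ℝ}
  {T : ℕ}

theorem payoff_avg_left (hK : Measurable (Function.uncurry K)) (hKbd : ∀ w θ, |K w θ| ≤ BK)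
    (hg : Measurable g) (hgbd : ∀ w, |g w| ≤ Bg) (μs : ℕ → Measure (Fin p → ℝ))
    [∀ t, IsProbabilityMeasure (μs t)] (ν : Measure (Fin q → ℝ)) [IsProbabilityMeasure ν] :
    payoff g K ((T : ℝ≥0∞)⁻¹ • ∑ t ∈ Finset.range T, μs t) ν
      = (T : ℝ)⁻¹ * ∑ t ∈ Finset.range T, payoff g K (μs t) ν := by
  have hgi : ∀ t ∈ Finset.range T, Integrable g (μs t) := fun t _ =>
    Integrable.of_bound hg.aestronglyMeasurable Bg (ae_of_all _ hgbd)
  have hGi : ∀ t ∈ Finset.range T, Integrable (Gop K ν) (μs t) := fun t _ =>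
    Integrable.of_bound (measurable_Gop hK ν).aestronglyMeasurable BK
      (ae_of_all _ (abs_Gop_le hKbd ν))
  simp only [payoff]
  rw [integral_smul_finsetSum_measure _ hgi, integral_smul_finsetSum_measure _ hGi,
    Finset.sum_sub_distrib, mul_sub, ENNReal.toReal_inv, ENNReal.toReal_natCast]

theorem payoff_avg_right (hT : 0 < T) (hK : Measurable (Function.uncurry K))
    (hKbd : ∀ w θ, |K w θ| ≤ BK) (μ : Measure (Fin p → ℝ)) [IsProbabilityMeasure μ]
    (νs : ℕ → Measure (Fin q → ℝ)) [∀ t, IsProbabilityMeasure (νs t)] :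
    payoff g K μ ((T : ℝ≥0∞)⁻¹ • ∑ t ∈ Finset.range T, νs t)
      = (T : ℝ)⁻¹ * ∑ t ∈ Finset.range T, payoff g K μ (νs t) := by
  have hGop : ∀ w, Gop K ((T : ℝ≥0∞)⁻¹ • ∑ t ∈ Finset.range T, νs t) w
      = (T : ℝ)⁻¹ * ∑ t ∈ Finset.range T, Gop K (νs t) w := fun w => by
    rw [Gop, integral_smul_finsetSum_measure (f := K w) _ fun t _ => Integrable.of_bound
      (hK.comp measurable_prodMk_left).aestronglyMeasurable BK (ae_of_all _ (hKbd w)),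
      ENNReal.toReal_inv, ENNReal.toReal_natCast]
    rfl
  have hGi : ∀ t ∈ Finset.range T, Integrable (Gop K (νs t)) μ := fun t _ =>
    Integrable.of_bound (measurable_Gop hK (νs t)).aestronglyMeasurable BK
      (ae_of_all _ (abs_Gop_le hKbd (νs t)))
  have hT' : (T : ℝ) ≠ 0 := by positivity
  simp only [payoff, hGop]
  rw [integral_const_mul, integral_finsetSum _ hGi, Finset.sum_sub_distrib, Finset.sum_const,
    Finset.card_range, nsmul_eq_mul, mul_sub, inv_mul_cancel_left₀ hT']

end PayoffAverages

section MirrorDescentGame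

variable {p q : ℕ} {W : Set (Fin p → ℝ)} {Θ : Set (Fin q → ℝ)}
  {K : (Fin p → ℝ) → (Fin q → ℝ) → ℝ} {BK : ℝ} {g : (Fin p → ℝ) → ℝ} {Bg M η : ℝ}

theorem integral_neg_add_Gop (hK : Measurable (Function.uncurry K))
    (hKbd : ∀ w θ, |K w θ| ≤ BK) (hg : Measurable g) (hgbd : ∀ w, |g w| ≤ Bg)
    (μ : Measure (Fin p → ℝ)) [IsProbabilityMeasure μ] (ν : Measure (Fin q → ℝ))
    [IsProbabilityMeasure ν] :
    ∫ w, -(g w) + Gop K ν w ∂μ = -payoff g K μ ν := by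
  rw [integral_add (f := fun w => -(g w))
    (Integrable.of_bound hg.aestronglyMeasurable Bg (ae_of_all _ hgbd)).neg
    (Integrable.of_bound (measurable_Gop hK ν).aestronglyMeasurable BK
      (ae_of_all _ (abs_Gop_le hKbd ν))), integral_neg, payoff]
  ring

theorem mirrorDescent_round (hK : Measurable (Function.uncurry K))
    (hKbd : ∀ w θ, |K w θ| ≤ BK) (hg : Measurable g) (hgbd : ∀ w, |g w| ≤ Bg) (hM : 0 ≤ M)
    {μ μ' μNE : Measure (Fin p → ℝ)} {ρ ρ' ρNE : (Fin p → ℝ) → ℝ}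
    {ν ν' νNE : Measure (Fin q → ℝ)} {σ σ' σNE : (Fin q → ℝ) → ℝ}
    (hμ : IsDensityMeasure W μ ρ) (hμ' : IsDensityMeasure W μ' ρ')
    (hμNE : IsDensityMeasure W μNE ρNE) (hν : IsDensityMeasure Θ ν σ)
    (hν' : IsDensityMeasure Θ ν' σ') (hνNE : IsDensityMeasure Θ νNE σNE)
    (hMν : supNormOn W (fun w => g w - Gop K ν w) ≤ M)
    (hMμ : supNormOn Θ (fun θ => Gadj K μ θ) ≤ M)
    (hupdμ : μ' = MDmeas W η ρ (fun w => -(g w) + Gop K ν w))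
    (hupdν : ν' = MDmeas Θ η σ (fun θ => -(Gadj K μ θ)))
    (hKLμ : IntegrableOn (fun w => ρNE w * log (ρNE w / ρ w)) W)
    (hKLν : IntegrableOn (fun θ => σNE θ * log (σNE θ / σ θ)) Θ) :
    (IntegrableOn (fun w => ρNE w * log (ρNE w / ρ' w)) W ∧
      IntegrableOn (fun θ => σNE θ * log (σNE θ / σ' θ)) Θ) ∧
    η * (payoff g K μNE ν - payoff g K μ νNE)
      ≤ (relEntropy (volume.restrict W) ρNE ρ + relEntropy (volume.restrict Θ) σNE σ)
        - (relEntropy (volume.restrict W) ρNE ρ' + relEntropy (volume.restrict Θ) σNE σ')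
        + M ^ 2 * η ^ 2 := by
  have := hμ.1; have := hμNE.1; have := hν.1; have := hνNE.1
  obtain ⟨hKLμ', hstepμ⟩ := hμ.mirrorDescent_step hμ' hμNE hupdμ
    (hg.neg.add (measurable_Gop hK ν)) (B := Bg + BK)
    (fun w => (abs_add_le _ _).trans
      (by rw [abs_neg]; exact add_le_add (hgbd w) (abs_Gop_le hKbd ν w)))
    hM (by simpa only [supNormOn, neg_add_eq_sub, abs_sub_comm] using hMν) hKLμ
  obtain ⟨hKLν', hstepν⟩ := hν.mirrorDescent_step hν' hνNE hupdν
    (measurable_Gadj hK μ).neg (B := BK) (fun θ => (abs_neg _).trans_le (abs_Gadj_le hKbd μ θ))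
    hM (by simpa only [supNormOn, abs_neg] using hMμ) hKLν
  refine ⟨⟨hKLμ', hKLν'⟩, ?_⟩
  rw [integral_neg_add_Gop hK hKbd hg hgbd, integral_neg_add_Gop hK hKbd hg hgbd] at hstepμ
  rw [integral_neg, integral_neg, ← integral_Gop_eq_integral_Gadj hK hKbd,
    ← integral_Gop_eq_integral_Gadj hK hKbd] at hstepν
  simp only [payoff] at hstepμ ⊢
  linarith

end MirrorDescentGame

theorem md_converges_to_mixed_NE_general
    (p q T : ℕ) (hT : 0 < T)
    (W : Set (Fin p → ℝ)) (Θ : Set (Fin q → ℝ))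
    (K : (Fin p → ℝ) → (Fin q → ℝ) → ℝ) (hK : Measurable (Function.uncurry K))
    (BK : ℝ) (hKbd : ∀ w θ, |K w θ| ≤ BK)
    (g : (Fin p → ℝ) → ℝ) (hg : Measurable g) (Bg : ℝ) (hgbd : ∀ w, |g w| ≤ Bg)
    (M : ℝ) (hM : 0 < M)
    (hM1 : ∀ ν : Measure (Fin q → ℝ), (∃ σ, IsDensityMeasure Θ ν σ) →
        supNormOn W (fun w => g w - Gop K ν w) ≤ M)
    (hM2 : ∀ μ : Measure (Fin p → ℝ), (∃ ρ, IsDensityMeasure W μ ρ) →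
        supNormOn Θ (fun θ => Gadj K μ θ) ≤ M)
    (μNE : Measure (Fin p → ℝ)) (ρNE : (Fin p → ℝ) → ℝ)
    (hμNE : IsDensityMeasure W μNE ρNE)
    (νNE : Measure (Fin q → ℝ)) (σNE : (Fin q → ℝ) → ℝ)
    (hνNE : IsDensityMeasure Θ νNE σNE)
    (hNE1 : ∀ μ : Measure (Fin p → ℝ), (∃ ρ, IsDensityMeasure W μ ρ) →
        payoff g K μ νNE ≤ payoff g K μNE νNE)
    (hNE2 : ∀ ν : Measure (Fin q → ℝ), (∃ σ, IsDensityMeasure Θ ν σ) →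
        payoff g K μNE νNE ≤ payoff g K μNE ν)
    (μs : ℕ → Measure (Fin p → ℝ)) (ρs : ℕ → (Fin p → ℝ) → ℝ)
    (hμs : ∀ t, IsDensityMeasure W (μs t) (ρs t))
    (νs : ℕ → Measure (Fin q → ℝ)) (σs : ℕ → (Fin q → ℝ) → ℝ)
    (hνs : ∀ t, IsDensityMeasure Θ (νs t) (σs t))
    (hKL1 : IntegrableOn (fun w => ρNE w * Real.log (ρNE w / ρs 0 w)) W)
    (hKL2 : IntegrableOn (fun θ => σNE θ * Real.log (σNE θ / σs 0 θ)) Θ)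
    (D₀ : ℝ)
    (hD₀ : D₀ = (∫ w in W, ρNE w * Real.log (ρNE w / ρs 0 w))
        + ∫ θ in Θ, σNE θ * Real.log (σNE θ / σs 0 θ))
    (hD₀pos : 0 < D₀)
    (η : ℝ) (hη : η = Real.sqrt (D₀ / (T : ℝ)) / M)
    (hrec1 : ∀ t, t < T →
        μs (t + 1) = MDmeas W η (ρs t) (fun w => -(g w) + Gop K (νs t) w))
    (hrec2 : ∀ t, t < T →
        νs (t + 1) = MDmeas Θ η (σs t) (fun θ => -(Gadj K (μs t) θ))) :
    payoff g K μNE ((T : ℝ≥0∞)⁻¹ • ∑ t ∈ Finset.range T, νs t)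
        - payoff g K ((T : ℝ≥0∞)⁻¹ • ∑ t ∈ Finset.range T, μs t) νNE
      ≤ 2 * M * Real.sqrt (D₀ / (T : ℝ)) ∧
    |payoff g K μNE ((T : ℝ≥0∞)⁻¹ • ∑ t ∈ Finset.range T, νs t)
        - payoff g K μNE νNE| ≤ 2 * M * Real.sqrt (D₀ / (T : ℝ)) ∧
    |payoff g K ((T : ℝ≥0∞)⁻¹ • ∑ t ∈ Finset.range T, μs t) νNE
        - payoff g K μNE νNE| ≤ 2 * M * Real.sqrt (D₀ / (T : ℝ)) := by
  have := hμNE.1; have := hνNE.1; have := fun t => (hμs t).1; have := fun t => (hνs t).1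
  have hround := fun t (ht : t < T) (hKL : IntegrableOn (fun w => ρNE w * log (ρNE w / ρs t w)) W
      ∧ IntegrableOn (fun θ => σNE θ * log (σNE θ / σs t θ)) Θ) =>
    mirrorDescent_round hK hKbd hg hgbd hM.le (hμs t) (hμs (t + 1)) hμNE (hνs t) (hνs (t + 1))
      hνNE (hM1 _ ⟨_, hνs t⟩) (hM2 _ ⟨_, hμs t⟩) (hrec1 t ht) (hrec2 t ht) hKL.1 hKL.2
  have hKL : ∀ t ≤ T, IntegrableOn (fun w => ρNE w * log (ρNE w / ρs t w)) W
      ∧ IntegrableOn (fun θ => σNE θ * log (σNE θ / σs t θ)) Θ := by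
    intro t
    induction t with
    | zero => exact fun _ => ⟨hKL1, hKL2⟩
    | succ t ih => exact fun ht => (hround t ht (ih (Nat.le_of_succ_le ht))).1
  have hregret : (T : ℝ)⁻¹ * ∑ t ∈ Finset.range T, (payoff g K μNE (νs t) - payoff g K (μs t) νNE)
      ≤ 2 * M * Real.sqrt (D₀ / (T : ℝ)) := by
    subst hD₀
    exact avg_le_of_telescoping hT hM hD₀pos
      (add_nonneg ((hμs T).isProbDensity.relEntropy_nonneg hμNE.isProbDensity)
        ((hνs T).isProbDensity.relEntropy_nonneg hνNE.isProbDensity)) hη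
      fun t ht => (hround t ht (hKL t ht.le)).2
  have hgap : payoff g K μNE ((T : ℝ≥0∞)⁻¹ • ∑ t ∈ Finset.range T, νs t)
      - payoff g K ((T : ℝ≥0∞)⁻¹ • ∑ t ∈ Finset.range T, μs t) νNE
        ≤ 2 * M * Real.sqrt (D₀ / (T : ℝ)) := by
    rwa [payoff_avg_right hT hK hKbd, payoff_avg_left hK hKbd hg hgbd, ← mul_sub,
      ← Finset.sum_sub_distrib]
  have hν := hNE2 _ ⟨_, .avg hT hνs⟩
  have hμ := hNE1 _ ⟨_, .avg hT hμs⟩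
  exact ⟨hgap, abs_le.2 ⟨by linarith, by linarith⟩, abs_le.2 ⟨by linarith, by linarith⟩⟩

/-- convergence of infinite-dimensional entropic mirror descent to a
mixed Nash equilibrium. -/
theorem md_converges_to_mixed_NE
    (p q T : ℕ) (hT : 0 < T)
    (W : Set (Fin p → ℝ)) (Θ : Set (Fin q → ℝ))
    (hW : MeasurableSet W) (hΘ : MeasurableSet Θ)
    (hW0 : volume W ≠ 0) (hWfin : volume W ≠ ⊤)
    (hΘ0 : volume Θ ≠ 0) (hΘfin : volume Θ ≠ ⊤)
    (K : (Fin p → ℝ) → (Fin q → ℝ) → ℝ) (hK : Measurable (Function.uncurry K))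
    (BK : ℝ) (hKbd : ∀ w θ, |K w θ| ≤ BK)
    (g : (Fin p → ℝ) → ℝ) (hg : Measurable g) (Bg : ℝ) (hgbd : ∀ w, |g w| ≤ Bg)
    (M : ℝ) (hM : 0 < M)
    (hM1 : ∀ ν : Measure (Fin q → ℝ), (∃ σ, IsDensityMeasure Θ ν σ) →
        supNormOn W (fun w => g w - Gop K ν w) ≤ M)
    (hM2 : ∀ μ : Measure (Fin p → ℝ), (∃ ρ, IsDensityMeasure W μ ρ) →
        supNormOn Θ (fun θ => Gadj K μ θ) ≤ M)
    (μNE : Measure (Fin p → ℝ)) (ρNE : (Fin p → ℝ) → ℝ)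
    (hμNE : IsDensityMeasure W μNE ρNE)
    (νNE : Measure (Fin q → ℝ)) (σNE : (Fin q → ℝ) → ℝ)
    (hνNE : IsDensityMeasure Θ νNE σNE)
    (hNE1 : ∀ μ : Measure (Fin p → ℝ), (∃ ρ, IsDensityMeasure W μ ρ) →
        payoff g K μ νNE ≤ payoff g K μNE νNE)
    (hNE2 : ∀ ν : Measure (Fin q → ℝ), (∃ σ, IsDensityMeasure Θ ν σ) →
        payoff g K μNE νNE ≤ payoff g K μNE ν)
    (μs : ℕ → Measure (Fin p → ℝ)) (ρs : ℕ → (Fin p → ℝ) → ℝ)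
    (hμs : ∀ t, IsDensityMeasure W (μs t) (ρs t))
    (νs : ℕ → Measure (Fin q → ℝ)) (σs : ℕ → (Fin q → ℝ) → ℝ)
    (hνs : ∀ t, IsDensityMeasure Θ (νs t) (σs t))
    (hKL1 : IntegrableOn (fun w => ρNE w * Real.log (ρNE w / ρs 0 w)) W)
    (hKL2 : IntegrableOn (fun θ => σNE θ * Real.log (σNE θ / σs 0 θ)) Θ)
    (D₀ : ℝ)
    (hD₀ : D₀ = (∫ w in W, ρNE w * Real.log (ρNE w / ρs 0 w))
        + ∫ θ in Θ, σNE θ * Real.log (σNE θ / σs 0 θ))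
    (hD₀pos : 0 < D₀)
    (η : ℝ) (hη : η = Real.sqrt (D₀ / (T : ℝ)) / M)
    (hrec1 : ∀ t, t < T →
        μs (t + 1) = MDmeas W η (ρs t) (fun w => -(g w) + Gop K (νs t) w))
    (hrec2 : ∀ t, t < T →
        νs (t + 1) = MDmeas Θ η (σs t) (fun θ => -(Gadj K (μs t) θ))) :
    payoff g K μNE ((T : ℝ≥0∞)⁻¹ • ∑ t ∈ Finset.range T, νs t)
        - payoff g K ((T : ℝ≥0∞)⁻¹ • ∑ t ∈ Finset.range T, μs t) νNE
      ≤ 2 * M * Real.sqrt (D₀ / (T : ℝ)) ∧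
    |payoff g K μNE ((T : ℝ≥0∞)⁻¹ • ∑ t ∈ Finset.range T, νs t)
        - payoff g K μNE νNE| ≤ 2 * M * Real.sqrt (D₀ / (T : ℝ)) ∧
    |payoff g K ((T : ℝ≥0∞)⁻¹ • ∑ t ∈ Finset.range T, μs t) νNE
        - payoff g K μNE νNE| ≤ 2 * M * Real.sqrt (D₀ / (T : ℝ)) :=
  md_converges_to_mixed_NE_general p q T hT W Θ K hK BK hKbd g hg Bg hgbd M hM hM1 hM2 μNE ρNE hμNE
    νNE σNE hνNE hNE1 hNE2 μs ρs hμs νs σs hνs hKL1 hKL2 D₀ hD₀ hD₀pos η hη hrec1 hrec2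

end

end Paper
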